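/- For every integer n ≥ 0, F(1, 1, n+2, 1/2) = (n+1) ( ψ((n+2)/2) − ψ((n+1)/2) ), where ψ = Γ'/Γ is the digamma function. -/

import Mathlib

open scoped BigOperators

/-- The Gauss hypergeometric series `F(1,1,n+2,z)` at a real argument. -/
noncomputable def hypF (a b c : ℝ) (z : ℝ) : ℝ :=
  ∑' k : ℕ, ((ascPochhammer ℝ k).eval a * (ascPochhammer ℝ k).eval b /
      ((ascPochhammer ℝ k).eval c * (Nat.factorial k : ℝ))) * z ^ k

/-- The digamma function `ψ = Γ'/Γ`. -/
noncomputable def digamma (x : ℝ) : ℝ := deriv Real.Gamma x / Real.Gamma x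

/-!
Write `F n z = F(1,1,n+2,z) = ∑ t n z k` with `t n z k = k! (n+1)! / (n+1+k)! · z^k`.
The termwise identity `t n z k - t n z (k+1) = (1-z) t n z k + z (n+1)/(n+2) t (n+1) z k`
telescopes to the contiguous relation `(1-z) F n z + z (n+1)/(n+2) F (n+1) z = 1`.
At `z = 1/2` this reads `F n + (n+1)/(n+2) F (n+1) = 2`, and `ψ(x+1) = ψ(x) + 1/x` shows that
`(n+1)(ψ((n+2)/2) - ψ((n+1)/2))` satisfies the same recurrence.  Both sides start at
`2 log 2`: `F 0 z = -log(1-z)/z`, and `ψ(1) - ψ(1/2) = 2 log 2`.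
-/

open Nat

namespace HypF

noncomputable def term (n : ℕ) (z : ℝ) (k : ℕ) : ℝ :=
  (k ! * (n + 1)! / (n + 1 + k)! : ℝ) * z ^ k

theorem hypF_eq_tsum_term (n : ℕ) (z : ℝ) :
    hypF 1 1 ((n : ℝ) + 2) z = ∑' k, term n z k := by
  unfold hypF term
  congr 1
  funext k
  have hpoch : (ascPochhammer ℝ k).eval ((n : ℝ) + 2) = ((n + 1 + k)! : ℝ) / (n + 1)! := by
    rw [eq_div_iff (by positivity), mul_comm, ← factorial_mul_ascPochhammer ℝ (n + 1) k]
    push_cast; ring_nf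
  rw [ascPochhammer_eval_one, hpoch]
  field_simp

theorem term_coeff_le_one (n k : ℕ) : (k ! * (n + 1)! / (n + 1 + k)! : ℝ) ≤ 1 := by
  rw [div_le_one (by positivity), mul_comm]
  exact_mod_cast Nat.le_of_dvd (factorial_pos _) (factorial_mul_factorial_dvd_factorial_add _ _)

theorem summable_term (n : ℕ) {z : ℝ} (hz : |z| < 1) : Summable (term n z) := by
  refine Summable.of_norm_bounded (summable_geometric_of_lt_one (abs_nonneg z) hz) fun k => ?_
  rw [term, norm_mul, Real.norm_eq_abs, Real.norm_eq_abs, abs_of_nonneg (by positivity), abs_pow]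
  exact mul_le_of_le_one_left (by positivity) (term_coeff_le_one n k)

theorem term_succ_left (n : ℕ) (z : ℝ) (k : ℕ) :
    term (n + 1) z k = (n + 2) / (n + k + 2) * term n z k := by
  have hk : (n + 1 + 1 + k)! = (n + k + 2) * (n + 1 + k)! := by
    rw [show n + 1 + 1 + k = n + 1 + k + 1 by ring, factorial_succ]; ring
  unfold term
  rw [hk, factorial_succ (n + 1)]
  push_cast
  field_simp
  ring

theorem term_succ_right (n : ℕ) (z : ℝ) (k : ℕ) :
    term n z (k + 1) = (k + 1) * z / (n + k + 2) * term n z k := by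
  have hk : (n + 1 + (k + 1))! = (n + k + 2) * (n + 1 + k)! := by
    rw [← add_assoc, factorial_succ]; ring
  unfold term
  rw [hk, factorial_succ k, pow_succ]
  push_cast
  field_simp

theorem term_sub_term_succ (n : ℕ) (z : ℝ) (k : ℕ) :
    term n z k - term n z (k + 1) =
      (1 - z) * term n z k + z * ((n + 1) / (n + 2)) * term (n + 1) z k := by
  rw [term_succ_left, term_succ_right]
  field_simp
  ring

theorem term_apply_zero (n : ℕ) (z : ℝ) : term n z 0 = 1 := by
  simp [term, (factorial_pos (n + 1)).ne']

theorem tsum_term_contiguous (n : ℕ) {z : ℝ} (hz : |z| < 1) :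
    (1 - z) * ∑' k, term n z k + z * ((n + 1) / (n + 2)) * ∑' k, term (n + 1) z k = 1 := by
  have hF := (summable_term n hz).hasSum
  have hshift : HasSum (fun k => term n z (k + 1)) (∑' k, term n z k - 1) := by
    simpa [term_apply_zero] using (hasSum_nat_add_iff' 1).mpr hF
  have hsum := (hF.sub hshift).unique <| by
    simpa only [term_sub_term_succ] using (hF.mul_left (1 - z)).add
      ((summable_term (n + 1) hz).hasSum.mul_left (z * ((n + 1) / (n + 2))))
  linarith

theorem mul_tsum_term_zero {z : ℝ} (hz : |z| < 1) :
    z * ∑' k, term 0 z k = -Real.log (1 - z) := by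
  rw [← (Real.hasSum_pow_div_log_of_abs_lt_one hz).tsum_eq, ← tsum_mul_left]
  congr 1
  funext k
  simp only [term, zero_add, factorial_zero, cast_one, add_comm 1 k, factorial_succ, cast_mul,
    cast_add, pow_succ]
  field_simp

end HypF

theorem digamma_add_one {x : ℝ} (hx : ∀ m : ℕ, x ≠ -m) :
    digamma (x + 1) = digamma x + 1 / x := by
  have hx0 : x ≠ 0 := by simpa using hx 0
  have hderiv : deriv Real.Gamma (x + 1) = Real.Gamma x + x * deriv Real.Gamma x := by
    have hshift : deriv (fun y => Real.Gamma (y + 1)) x = deriv Real.Gamma (x + 1) :=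
      deriv_comp_add_const _ _ _
    have hfun : (fun y => Real.Gamma (y + 1)) =ᶠ[nhds x] fun y => y * Real.Gamma y := by
      filter_upwards [isOpen_ne.mem_nhds hx0] with y hy
      exact Real.Gamma_add_one hy
    rw [← hshift, hfun.deriv_eq, deriv_fun_mul differentiableAt_fun_id
      (Real.differentiableAt_Gamma hx), deriv_id'', one_mul]
  unfold digamma
  rw [hderiv, Real.Gamma_add_one hx0]
  field_simp [Real.Gamma_ne_zero hx]
  ring

theorem digamma_one_sub_digamma_one_half : digamma 1 - digamma (1 / 2) = 2 * Real.log 2 := by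
  unfold digamma
  rw [Real.hasDerivAt_Gamma_one.deriv, Real.hasDerivAt_Gamma_one_half.deriv, Real.Gamma_one,
    Real.Gamma_one_half_eq]
  field_simp [(Real.sqrt_pos.mpr Real.pi_pos).ne']
  ring

open HypF in
/-- For every `n ≥ 0`, `F(1,1,n+2,1/2) = (n+1)(ψ((n+2)/2) − ψ((n+1)/2))`. -/
theorem stmt_19 (n : ℕ) :
    hypF 1 1 ((n : ℝ) + 2) (1 / 2) =
      ((n : ℝ) + 1) * (digamma (((n : ℝ) + 2) / 2) - digamma (((n : ℝ) + 1) / 2)) := by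
  have hhalf : |(1 / 2 : ℝ)| < 1 := by norm_num [abs_of_pos]
  induction n with
  | zero =>
    have hbase := mul_tsum_term_zero hhalf
    rw [show (1 : ℝ) - 1 / 2 = 2⁻¹ by norm_num, Real.log_inv] at hbase
    rw [hypF_eq_tsum_term]
    norm_num [digamma_one_sub_digamma_one_half]
    linarith
  | succ n ih =>
    have hrec := tsum_term_contiguous n hhalf
    have hψ := digamma_add_one (x := ((n : ℝ) + 1) / 2) fun m h => by
      have : (0 : ℝ) ≤ m := m.cast_nonneg
      linarith [show (0 : ℝ) < (n + 1) / 2 by positivity]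
    rw [hypF_eq_tsum_term] at ih ⊢
    have hG :
        ∑' k, term (n + 1) (1 / 2) k = (n + 2) / (n + 1) * (2 - ∑' k, term n (1 / 2) k) := by
      field_simp at hrec ⊢
      linarith
    rw [hG, ih]
    push_cast
    rw [show ((n : ℝ) + 1 + 2) / 2 = (n + 1) / 2 + 1 by ring,
      show ((n : ℝ) + 1 + 1) / 2 = (n + 2) / 2 by ring, hψ]
    field_simp
    ring
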